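/- Losslessness of one speculative sampling step: let V be a finite type and let p, q : V → ℝ be probability mass functions on V with p ≠ q. Define for each x ∈ V the acceptance mass α(x) := min(p(x), q(x)), the rejection probability ρ := 1 − Σ_y α(y), and the normalized residual r(x) := max(0, p(x) − q(x)) / Σ_y max(0, p(y) − q(y)). Then for every x ∈ V, α(x) + ρ · r(x) = p(x); that is, the output distribution of speculative sampling (draft from q, accept with probability min(1, p(x)/q(x)), otherwise resample from r) is exactly p. -/

import Mathlib

/-!
The residual mass `∑ y, max 0 (p y - q y)` equals `∑ y, p y - ∑ y, min (p y) (q y)`, which is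
exactly the rejection probability `ρ`. Hence `ρ * r x = max 0 (p x - q x) = p x - min (p x) (q x)`,
as soon as the residual mass is nonzero; and it is positive because two distinct mass functions
with the same total mass cannot satisfy `p ≤ q` pointwise.
-/

open Finset

theorem max_zero_sub_eq_sub_min {α : Type*} [AddCommGroup α] [LinearOrder α]
    [IsOrderedAddMonoid α] (a b : α) : max 0 (a - b) = a - min a b := by
  rw [sub_inf, sub_self]

theorem sum_max_zero_sub_eq_sum_sub_sum_min {ι α : Type*} [AddCommGroup α] [LinearOrder α]
    [IsOrderedAddMonoid α] (s : Finset ι) (p q : ι → α) :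
    ∑ y ∈ s, max 0 (p y - q y) = ∑ y ∈ s, p y - ∑ y ∈ s, min (p y) (q y) := by
  simp only [max_zero_sub_eq_sub_min, sum_sub_distrib]

theorem exists_lt_of_sum_eq_of_ne {ι α : Type*} [Fintype ι] [AddCommMonoid α] [LinearOrder α]
    [IsOrderedCancelAddMonoid α] {p q : ι → α} (hsum : ∑ y, p y = ∑ y, q y) (hne : p ≠ q) :
    ∃ y, q y < p y := by
  by_contra! hle
  exact hne <| funext fun y ↦
    (sum_eq_sum_iff_of_le fun y _ ↦ hle y).mp hsum y (mem_univ y)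

theorem sum_max_zero_sub_pos_of_sum_eq_of_ne {ι α : Type*} [Fintype ι] [AddCommGroup α]
    [LinearOrder α] [IsOrderedAddMonoid α] {p q : ι → α} (hsum : ∑ y, p y = ∑ y, q y)
    (hne : p ≠ q) : 0 < ∑ y, max 0 (p y - q y) := by
  obtain ⟨y, hy⟩ := exists_lt_of_sum_eq_of_ne hsum hne
  exact (sum_pos_iff_of_nonneg fun y _ ↦ le_max_left _ _).mpr
    ⟨y, mem_univ y, lt_max_of_lt_right (sub_pos.mpr hy)⟩

theorem speculative_sampling_lossless_general
    (V : Type*) [Fintype V] (p q : V → ℝ)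
    (hps : ∑ x, p x = 1) (hqs : ∑ x, q x = 1)
    (hne : p ≠ q) :
    ∀ x : V,
      min (p x) (q x) +
        (1 - ∑ y, min (p y) (q y)) *
          (max 0 (p x - q x) / ∑ y, max 0 (p y - q y)) = p x := by
  intro x
  have hρ : 1 - ∑ y, min (p y) (q y) = ∑ y, max 0 (p y - q y) := by
    rw [sum_max_zero_sub_eq_sum_sub_sum_min, hps]
  have hpos : 0 < ∑ y, max 0 (p y - q y) :=
    sum_max_zero_sub_pos_of_sum_eq_of_ne (hps.trans hqs.symm) hne
  rw [hρ, mul_div_cancel₀ _ hpos.ne', max_zero_sub_eq_sub_min]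
  ring

/-- Losslessness of one speculative sampling step: for probability mass
functions `p ≠ q` on a finite `V`, with acceptance mass `α x = min (p x) (q x)`,
rejection probability `ρ = 1 - ∑ y, α y` and normalized residual
`r x = max 0 (p x - q x) / ∑ y, max 0 (p y - q y)`, we have
`α x + ρ * r x = p x` for every `x`. -/
theorem speculative_sampling_lossless
    (V : Type*) [Fintype V] (p q : V → ℝ)
    (hp : ∀ x, 0 ≤ p x) (hq : ∀ x, 0 ≤ q x)
    (hps : ∑ x, p x = 1) (hqs : ∑ x, q x = 1)
    (hne : p ≠ q) :
    ∀ x : V,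
      min (p x) (q x) +
        (1 - ∑ y, min (p y) (q y)) *
          (max 0 (p x - q x) / ∑ y, max 0 (p y - q y)) = p x :=
  speculative_sampling_lossless_general V p q hps hqs hne
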